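/- arXiv:2010.04721 — 2 statements merged into one kernel-verified Lean document; each statement's English description precedes it below -/
import Mathlib

section
/- Let ω : [-1/2,1/2] → ℝ be a unimodal dispersion relation, let γ > 0, let k ∈ (0,1/2), and suppose that J̃(ε − i·ω(k)) tends to a limit ζ ∈ ℂ as ε → 0+; put ν(k) := (1 + γζ)⁻¹ and ω̄'(k) := ω'(k)/(2π). Then the transmission coefficient p₊(k) := |1 − γν(k)/(2|ω̄'(k)|)|² satisfies p₊(k) > 0, and the reflection coefficient p₋(k) := (γ|ν(k)|/(2|ω̄'(k)|))² satisfies 0 < p₋(k) < 1. -/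
/-!
At `λ = ε - i ω(k)` the real part of `λ / (λ² + ω(ℓ)²)` is the mean of the Lorentzians
`ε / (ε² + (ω(k) ± ω(ℓ))²)`. For any `c > ω'(k)` we have `|ω(ℓ) - ω(k)| ≤ c |ℓ - k|` on a window
`[k - η, k + η]`, and likewise around `-k` by evenness, so `Re J̃(ε - i ω(k)) ≥ (2/c) arctan (cη/ε)`,
which tends to `π/c`. Hence `Re ζ ≥ π/ω'(k)`. Since `γ / (2|ω̄'(k)|) = γπ/ω'(k) =: r`, this gives
`Re (1 + γζ) ≥ 1 + r > r`, so `r |ν(k)| < 1` and `r ν(k) ≠ 1`.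
-/

open Real Filter Topology Set MeasureTheory intervalIntegral

noncomputable def lorentzian (ε x : ℝ) : ℝ := ε / (ε ^ 2 + x ^ 2)

lemma lorentzian_nonneg {ε : ℝ} (hε : 0 ≤ ε) (x : ℝ) : 0 ≤ lorentzian ε x := by
  unfold lorentzian
  positivity

lemma lorentzian_le_of_sq_le {ε x y : ℝ} (hε : 0 < ε) (h : x ^ 2 ≤ y ^ 2) :
    lorentzian ε y ≤ lorentzian ε x :=
  div_le_div_of_nonneg_left hε.le (by positivity) (by linarith)

lemma continuous_lorentzian {ε : ℝ} (hε : 0 < ε) : Continuous (lorentzian ε) :=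
  continuous_const.div (continuous_const.add (continuous_pow 2)) fun x => by positivity

lemma integral_lorentzian_mul_sub {ε c : ℝ} (hε : 0 < ε) (hc : 0 < c) (a η : ℝ) :
    ∫ x in (a - η)..(a + η), lorentzian ε (c * (x - a)) = 2 / c * arctan (c * η / ε) := by
  have hF : ∀ x, HasDerivAt (fun x => arctan (c * (x - a) / ε) / c)
      (lorentzian ε (c * (x - a))) x := by
    intro x
    have h := ((((hasDerivAt_id x).sub_const a).const_mul c).div_const ε).arctan.div_const c
    refine h.congr_deriv ?_
    simp only [lorentzian, id]
    field_simp
  rw [integral_eq_sub_of_hasDerivAt (fun x _ => hF x)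
    (((continuous_lorentzian hε).comp (by fun_prop)).intervalIntegrable _ _)]
  simp only [add_sub_cancel_left, sub_sub_cancel_left, mul_neg, neg_div, arctan_neg]
  ring

lemma tendsto_two_div_mul_arctan {c η : ℝ} (hc : 0 < c) (hη : 0 < η) :
    Tendsto (fun ε => 2 / c * arctan (c * η / ε)) (𝓝[>] 0) (𝓝 (π / c)) := by
  have h : Tendsto (fun ε : ℝ => c * η / ε) (𝓝[>] 0) atTop := by
    simpa only [div_eq_mul_inv] using tendsto_inv_nhdsGT_zero.const_mul_atTop (by positivity)
  rw [show π / c = 2 / c * (π / 2) by ring]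
  exact ((tendsto_nhds_of_tendsto_nhdsWithin tendsto_arctan_atTop).comp h).const_mul (2 / c)

lemma ofReal_sub_I_mul_ne_zero {ε : ℝ} (hε : 0 < ε) (t : ℝ) : (ε : ℂ) - Complex.I * t ≠ 0 := by
  intro h
  simpa [hε.ne'] using congrArg Complex.re h

lemma re_inv_ofReal_sub_I_mul (ε t : ℝ) :
    ((ε : ℂ) - Complex.I * t)⁻¹.re = lorentzian ε t := by
  simp [Complex.inv_re, Complex.normSq_apply, lorentzian, pow_two]

lemma sq_add_sq_eq_mul (ε b w : ℝ) :
    ((ε : ℂ) - Complex.I * b) ^ 2 + (w : ℂ) ^ 2 =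
      ((ε : ℂ) - Complex.I * ↑(b + w)) * ((ε : ℂ) - Complex.I * ↑(b - w)) := by
  push_cast
  linear_combination (w : ℂ) ^ 2 * Complex.I_sq

lemma re_div_sq_add_sq {ε : ℝ} (hε : 0 < ε) (b w : ℝ) :
    (((ε : ℂ) - Complex.I * b) / (((ε : ℂ) - Complex.I * b) ^ 2 + (w : ℂ) ^ 2)).re =
      (lorentzian ε (b + w) + lorentzian ε (b - w)) / 2 := by
  have h₁ := ofReal_sub_I_mul_ne_zero hε (b + w)
  have h₂ := ofReal_sub_I_mul_ne_zero hε (b - w)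
  have : ((ε : ℂ) - Complex.I * b) / (((ε : ℂ) - Complex.I * b) ^ 2 + (w : ℂ) ^ 2) =
      (((ε : ℂ) - Complex.I * ↑(b + w))⁻¹ + ((ε : ℂ) - Complex.I * ↑(b - w))⁻¹) / 2 := by
    rw [sq_add_sq_eq_mul]
    field_simp
    push_cast
    ring
  rw [this, Complex.div_ofNat_re, Complex.add_re, re_inv_ofReal_sub_I_mul,
    re_inv_ofReal_sub_I_mul]

noncomputable def Jtilde (ω : ℝ → ℝ) (z : ℂ) : ℂ :=
  ∫ ℓ in (-(1/2) : ℝ)..(1/2), z / (z ^ 2 + (ω ℓ : ℂ) ^ 2)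

lemma re_Jtilde_eq {ω : ℝ → ℝ} (hω : ContinuousOn ω (Icc (-(1/2)) (1/2))) {ε : ℝ} (hε : 0 < ε)
    (b : ℝ) :
    (Jtilde ω (ε - Complex.I * b)).re =
      ∫ ℓ in (-(1/2) : ℝ)..(1/2), (lorentzian ε (b + ω ℓ) + lorentzian ε (b - ω ℓ)) / 2 := by
  have hint : IntervalIntegrable (fun ℓ => ((ε : ℂ) - Complex.I * b) /
      (((ε : ℂ) - Complex.I * b) ^ 2 + (ω ℓ : ℂ) ^ 2)) volume (-(1/2)) (1/2) := by
    refine ContinuousOn.intervalIntegrable ?_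
    rw [uIcc_of_le (by norm_num)]
    refine continuousOn_const.div (continuousOn_const.add ?_) fun ℓ _ => ?_
    · exact (Complex.continuous_ofReal.comp_continuousOn hω).pow 2
    · rw [sq_add_sq_eq_mul]
      exact mul_ne_zero (ofReal_sub_I_mul_ne_zero hε _) (ofReal_sub_I_mul_ne_zero hε _)
  exact (intervalIntegral_re hint).symm.trans
    (integral_congr fun ℓ _ => re_div_sq_add_sq hε b (ω ℓ))

lemma intervalIntegral.integral_neg_eq_two_mul_of_even {f : ℝ → ℝ} {a : ℝ} (ha : 0 ≤ a)
    (hf : IntervalIntegrable f volume (-a) a) (heven : ∀ x ∈ Icc 0 a, f (-x) = f x) :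
    ∫ x in (-a)..a, f x = 2 * ∫ x in 0..a, f x := by
  have h0 : (0 : ℝ) ∈ uIcc (-a) a := by rw [uIcc_of_le (by linarith)]; exact ⟨by linarith, ha⟩
  have hneg : ∫ x in (-a)..0, f x = ∫ x in 0..a, f x := by
    rw [← neg_zero, ← integral_comp_neg, neg_zero]
    refine integral_congr fun x hx => heven x ?_
    rwa [uIcc_of_le ha] at hx
  rw [← integral_add_adjacent_intervals
    (hf.mono_set (uIcc_subset_uIcc left_mem_uIcc h0))
    (hf.mono_set (uIcc_subset_uIcc h0 right_mem_uIcc)), hneg, two_mul]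

lemma HasDerivAt.eventually_abs_sub_le {f : ℝ → ℝ} {f' x c : ℝ} (hf : HasDerivAt f f' x)
    (hc : |f'| < c) : ∀ᶠ y in 𝓝 x, |f y - f x| ≤ c * |y - x| := by
  filter_upwards [(hasDerivAt_iff_isLittleO.mp hf).bound (sub_pos.mpr hc)] with y hy
  rw [Real.norm_eq_abs, Real.norm_eq_abs, smul_eq_mul] at hy
  calc |f y - f x| = |(f y - f x - (y - x) * f') + (y - x) * f'| := by ring_nf
    _ ≤ |f y - f x - (y - x) * f'| + |y - x| * |f'| := by
        rw [← abs_mul]; exact abs_add_le _ _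
    _ ≤ (c - |f'|) * |y - x| + |y - x| * |f'| := by gcongr
    _ = c * |y - x| := by ring

lemma two_div_mul_arctan_le_re_Jtilde {ω : ℝ → ℝ} (hcont : ContinuousOn ω (Icc (-(1/2)) (1/2)))
    (heven : ∀ ℓ ∈ Icc (-(1/2) : ℝ) (1/2), ω (-ℓ) = ω ℓ) {k η c ε : ℝ} (hη : 0 ≤ η)
    (hc : 0 < c) (hε : 0 < ε) (hwin : Icc (k - η) (k + η) ⊆ Icc 0 (1/2))
    (hlip : ∀ x ∈ Icc (k - η) (k + η), |ω x - ω k| ≤ c * |x - k|) :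
    2 / c * arctan (c * η / ε) ≤ (Jtilde ω (ε - Complex.I * ω k)).re := by
  set g := fun ℓ => (lorentzian ε (ω k + ω ℓ) + lorentzian ε (ω k - ω ℓ)) / 2
  have hg : IntervalIntegrable g volume (-(1/2)) (1/2) := by
    refine ContinuousOn.intervalIntegrable ?_
    rw [uIcc_of_le (by norm_num)]
    have hL := continuous_lorentzian hε
    exact ((hL.comp_continuousOn (continuousOn_const.add hcont)).add
      (hL.comp_continuousOn (continuousOn_const.sub hcont))).div_const 2
  have hhalf : Icc (0 : ℝ) (1/2) ⊆ uIcc (-(1/2)) (1/2) := by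
    rw [uIcc_of_le (by norm_num)]
    exact Icc_subset_Icc (by norm_num) le_rfl
  have hg0 : ∀ x, 0 ≤ g x := fun x =>
    div_nonneg (add_nonneg (lorentzian_nonneg hε.le _) (lorentzian_nonneg hε.le _)) zero_le_two
  have hle : ∀ x ∈ Icc (k - η) (k + η), lorentzian ε (c * (x - k)) ≤ 2 * g x := by
    intro x hx
    have hsq : (ω k - ω x) ^ 2 ≤ (c * (x - k)) ^ 2 := by
      rw [sq_le_sq, abs_sub_comm, abs_mul, abs_of_pos hc]
      exact hlip x hx
    have := lorentzian_nonneg hε.le (ω k + ω x)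
    have := lorentzian_le_of_sq_le hε hsq
    simp only [g]
    linarith
  rw [re_Jtilde_eq hcont hε, integral_neg_eq_two_mul_of_even (by norm_num) hg
    fun x hx => by simp only [g, heven x ⟨by linarith [hx.1], hx.2⟩]]
  calc 2 / c * arctan (c * η / ε) = ∫ x in (k - η)..(k + η), lorentzian ε (c * (x - k)) :=
        (integral_lorentzian_mul_sub hε hc k η).symm
    _ ≤ ∫ x in (k - η)..(k + η), 2 * g x :=
        integral_mono_on (by linarith)
          (((continuous_lorentzian hε).comp (by fun_prop)).intervalIntegrable _ _)
          ((hg.mono_set (by rw [uIcc_of_le (by linarith)]; exact hwin.trans hhalf)).const_mul 2) hle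
    _ = 2 * ∫ x in (k - η)..(k + η), g x := integral_const_mul 2 g
    _ ≤ 2 * ∫ x in 0..(1/2), g x := by
        gcongr
        refine integral_mono_interval (hwin ⟨le_rfl, by linarith⟩).1
          (by linarith) (hwin ⟨by linarith, le_rfl⟩).2
          (Eventually.of_forall hg0) (hg.mono_set (by rwa [uIcc_of_le (by norm_num)]))

lemma pi_div_abs_le_re_of_tendsto_Jtilde {ω : ℝ → ℝ} {A k : ℝ} {ζ : ℂ}
    (hcont : ContinuousOn ω (Icc (-(1/2)) (1/2)))
    (heven : ∀ ℓ ∈ Icc (-(1/2) : ℝ) (1/2), ω (-ℓ) = ω ℓ) (hk : k ∈ Ioo (0 : ℝ) (1/2))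
    (hderiv : HasDerivAt ω A k) (hA : A ≠ 0)
    (hlim : Tendsto (fun ε : ℝ => Jtilde ω (ε - Complex.I * ω k)) (𝓝[>] 0) (𝓝 ζ)) :
    π / |A| ≤ ζ.re := by
  have hbound : ∀ c, |A| < c → π / c ≤ ζ.re := by
    intro c hAc
    have hc : 0 < c := (abs_nonneg A).trans_lt hAc
    obtain ⟨η, hη, hwin⟩ := (nhds_basis_Icc_pos k).eventually_iff.mp
      ((hderiv.eventually_abs_sub_le hAc).and (Ioo_mem_nhds hk.1 hk.2))
    refine le_of_tendsto_of_tendsto (tendsto_two_div_mul_arctan hc hη)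
      ((Complex.continuous_re.tendsto ζ).comp hlim) ?_
    filter_upwards [self_mem_nhdsWithin] with ε hε
    exact two_div_mul_arctan_le_re_Jtilde hcont heven hη.le hc hε
      (fun x hx => Ioo_subset_Icc_self (hwin hx).2) (fun x hx => (hwin hx).1)
  have hcont_div : Tendsto (fun c => π / c) (𝓝[>] |A|) (𝓝 (π / |A|)) :=
    tendsto_nhdsWithin_of_tendsto_nhds
      (continuousAt_const.div continuousAt_id (abs_ne_zero.mpr hA))
  exact le_of_tendsto hcont_div (eventually_nhdsWithin_of_forall hbound)

lemma transmission_reflection_bounds {γ d : ℝ} {w : ℂ} (hγ : 0 < γ) (hd : 0 < d)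
    (hw : γ / d < w.re) :
    0 < ‖1 - (γ : ℂ) * w⁻¹ / (d : ℂ)‖ ^ 2 ∧ 0 < (γ * ‖w⁻¹‖ / d) ^ 2 ∧
      (γ * ‖w⁻¹‖ / d) ^ 2 < 1 := by
  have hnorm : γ / d < ‖w‖ := hw.trans_le (Complex.re_le_norm w)
  have hr : 0 < γ / d := by positivity
  have hw0 : w ≠ 0 := norm_pos_iff.mp (hr.trans hnorm)
  have hρ : γ * ‖w⁻¹‖ / d = γ / d / ‖w‖ := by rw [norm_inv]; ring
  have hρ0 : 0 < γ / d / ‖w‖ := by positivity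
  have hρ1 : γ / d / ‖w‖ < 1 := (div_lt_one (hr.trans hnorm)).mpr hnorm
  refine ⟨pow_pos (norm_pos_iff.mpr fun h => hw.ne ?_) 2, by rw [hρ]; positivity,
    by rw [hρ]; exact pow_lt_one₀ hρ0.le hρ1 two_ne_zero⟩
  have hd' : (d : ℂ) ≠ 0 := Complex.ofReal_ne_zero.mpr hd.ne'
  have : w = ((γ / d : ℝ) : ℂ) := by
    push_cast
    field_simp at h ⊢
    linear_combination h
  simp [this]

theorem stmt4_general (ω ω' : ℝ → ℝ) (γ : ℝ) (hγ : 0 < γ) (k : ℝ) (hk : k ∈ Set.Ioo (0:ℝ) (1/2))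
    (hcont : ContinuousOn ω (Set.Icc (-(1/2):ℝ) (1/2)))
    (heven : ∀ ℓ ∈ Set.Icc (-(1/2):ℝ) (1/2), ω (-ℓ) = ω ℓ)
    (hderiv : ∀ ℓ ∈ Set.Ioo (0:ℝ) (1/2), HasDerivAt ω (ω' ℓ) ℓ)
    (hpos : ∀ ℓ ∈ Set.Ioo (0:ℝ) (1/2), 0 < ω' ℓ)
    (ζ : ℂ)
    (hlim : Filter.Tendsto
      (fun ε : ℝ => ∫ ℓ in (-(1/2):ℝ)..(1/2),
        ((ε : ℂ) - Complex.I * (ω k : ℂ)) /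
          (((ε : ℂ) - Complex.I * (ω k : ℂ)) ^ 2 + ((ω ℓ : ℝ) : ℂ) ^ 2))
      (nhdsWithin 0 (Set.Ioi 0)) (nhds ζ)) :
    0 < ‖1 - (γ : ℂ) * (1 + (γ : ℂ) * ζ)⁻¹ / ((2 * |ω' k / (2 * Real.pi)| : ℝ) : ℂ)‖ ^ 2 ∧
    0 < (γ * ‖(1 + (γ : ℂ) * ζ)⁻¹‖ / (2 * |ω' k / (2 * Real.pi)|)) ^ 2 ∧
    (γ * ‖(1 + (γ : ℂ) * ζ)⁻¹‖ / (2 * |ω' k / (2 * Real.pi)|)) ^ 2 < 1 := by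
  have hA : 0 < ω' k := hpos k hk
  have hre : π / ω' k ≤ ζ.re := by
    simpa only [abs_of_pos hA] using
      pi_div_abs_le_re_of_tendsto_Jtilde hcont heven hk (hderiv k hk) hA.ne' hlim
  have hd : 2 * |ω' k / (2 * π)| = ω' k / π := by
    rw [abs_of_pos (by positivity)]
    field_simp
  refine transmission_reflection_bounds hγ (by positivity) ?_
  calc γ / (2 * |ω' k / (2 * π)|) = γ * (π / ω' k) := by rw [hd]; field_simp
    _ < 1 + γ * ζ.re := by linarith [mul_le_mul_of_nonneg_left hre hγ.le]
    _ = (1 + (γ : ℂ) * ζ).re := by simp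

theorem stmt4 (ω ω' : ℝ → ℝ) (γ : ℝ) (hγ : 0 < γ) (k : ℝ) (hk : k ∈ Set.Ioo (0:ℝ) (1/2))
    (hcont : ContinuousOn ω (Set.Icc (-(1/2):ℝ) (1/2)))
    (heven : ∀ ℓ ∈ Set.Icc (-(1/2):ℝ) (1/2), ω (-ℓ) = ω ℓ)
    (hderiv : ∀ ℓ ∈ Set.Ioo (0:ℝ) (1/2), HasDerivAt ω (ω' ℓ) ℓ)
    (hderivCont : ContinuousOn ω' (Set.Ioo (0:ℝ) (1/2)))
    (hpos : ∀ ℓ ∈ Set.Ioo (0:ℝ) (1/2), 0 < ω' ℓ)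
    (ζ : ℂ)
    (hlim : Filter.Tendsto
      (fun ε : ℝ => ∫ ℓ in (-(1/2):ℝ)..(1/2),
        ((ε : ℂ) - Complex.I * (ω k : ℂ)) /
          (((ε : ℂ) - Complex.I * (ω k : ℂ)) ^ 2 + ((ω ℓ : ℝ) : ℂ) ^ 2))
      (nhdsWithin 0 (Set.Ioi 0)) (nhds ζ)) :
    0 < ‖1 - (γ : ℂ) * (1 + (γ : ℂ) * ζ)⁻¹ / ((2 * |ω' k / (2 * Real.pi)| : ℝ) : ℂ)‖ ^ 2 ∧
    0 < (γ * ‖(1 + (γ : ℂ) * ζ)⁻¹‖ / (2 * |ω' k / (2 * Real.pi)|)) ^ 2 ∧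
    (γ * ‖(1 + (γ : ℂ) * ζ)⁻¹‖ / (2 * |ω' k / (2 * Real.pi)|)) ^ 2 < 1 :=
  stmt4_general ω ω' γ hγ k hk hcont heven hderiv hpos ζ hlim
end

section
/- Let γ > 0, ω_a > 0, and let k ∈ (0,1/2). Then the limit as ε → 0+ of (1 + γ·∫_{-1/2}^{1/2} (ε − i·ω_a·sin(πk))/((ε − i·ω_a·sin(πk))² + ω_a²·sin²(πℓ)) dℓ)⁻¹ exists and equals ν(k) = ω_a·cos(πk)/(ω_a·cos(πk) + γ). -/
/-!
Fix `λ` with `0 < re λ` and let `s = √(λ² + ω²)` (principal branch). Then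
`r = (s - λ) / (s + λ)` satisfies `‖r‖ < 1`: `re s > 0` and `im s` has the sign of `im λ`, so
`re (s * conj λ) > 0`. Put `z = e^{2πiℓ}`, so that `4 sin²(πℓ) = 2 - z - z⁻¹`. Partial fractions
give `λ / (λ² + ω² sin²(πℓ)) = s⁻¹ ((1 - r z)⁻¹ + (1 - r z⁻¹)⁻¹ - 1)`, and each
`(1 - r z^{±1})⁻¹` has mean `1` over a period (a power series in `r z^{±1}` with constant term
`1`), hence `J̃(λ) = 1 / √(λ² + ω²)`. This expression is continuous at `λ = -i ω sin(πk)`, where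
it equals `1 / (ω cos(πk))`.
-/

open Complex Real

namespace Complex

lemma one_sub_mul_exp_mem_slitPlane {w : ℂ} (hw : ‖w‖ < 1) (x : ℝ) :
    1 - w * exp (x * I) ∈ slitPlane := by
  rw [sub_eq_add_neg]
  exact mem_slitPlane_of_norm_lt_one (by simpa [norm_exp_ofReal_mul_I] using hw)

lemma sq_add_ofReal_sq_mem_slitPlane {z : ℂ} (hz : 0 < z.re) (ω : ℝ) :
    z ^ 2 + (ω : ℂ) ^ 2 ∈ slitPlane := by
  rw [mem_slitPlane_iff, ← ofReal_pow, add_re, add_im, ofReal_re, ofReal_im, pow_two, mul_re,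
    mul_im]
  rcases eq_or_ne z.im 0 with him | him
  · left
    rw [him]
    nlinarith
  · right
    intro h
    exact mul_ne_zero hz.ne' him (by linarith)

lemma re_sqrt_pos {z : ℂ} (hz : z ∈ slitPlane) : 0 < z.sqrt.re := by
  rw [sqrt, cpow_inv_two_re, Real.sqrt_pos]
  rcases mem_slitPlane_iff.mp hz with hre | him
  · linarith [norm_nonneg z]
  · linarith [neg_abs_le z.re, abs_re_lt_norm.mpr him]

lemma im_sqrt_mul_im_nonneg (z : ℂ) : 0 ≤ z.sqrt.im * z.im := by
  rcases le_or_gt 0 z.im with him | him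
  · rw [sqrt, cpow_inv_two_im_eq_sqrt him]
    positivity
  · rw [sqrt, cpow_inv_two_im_eq_neg_sqrt him]
    exact mul_nonneg_of_nonpos_of_nonpos (neg_nonpos.mpr (Real.sqrt_nonneg _)) him.le

lemma sq_sqrt (z : ℂ) : z.sqrt ^ 2 = z := cpow_ofNat_inv_pow z 2

lemma sqrt_ofReal_sq {a : ℝ} (ha : 0 ≤ a) : ((a : ℂ) ^ 2).sqrt = a := by
  rw [← ofReal_pow, sqrt_of_nonneg (zero_le_real.mpr (by positivity)), ofReal_re,
    Real.sqrt_sq ha]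

end Complex

lemma norm_sqrt_sub_lt_norm_sqrt_add {z : ℂ} (hz : 0 < z.re) (ω : ℝ) :
    ‖(z ^ 2 + (ω : ℂ) ^ 2).sqrt - z‖ < ‖(z ^ 2 + (ω : ℂ) ^ 2).sqrt + z‖ := by
  have hre := re_sqrt_pos (sq_add_ofReal_sq_mem_slitPlane hz ω)
  have him := im_sqrt_mul_im_nonneg (z ^ 2 + (ω : ℂ) ^ 2)
  rw [← ofReal_pow, add_im, ofReal_im, pow_two, mul_im, ← pow_two, ofReal_pow] at him
  generalize (z ^ 2 + (ω : ℂ) ^ 2).sqrt = s at hre him ⊢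
  refine (pow_lt_pow_iff_left₀ (norm_nonneg _) (norm_nonneg _) two_ne_zero).mp ?_
  rw [Complex.sq_norm, Complex.sq_norm, normSq_apply, normSq_apply]
  simp only [sub_re, sub_im, add_re, add_im]
  nlinarith [mul_pos hre hz]

lemma continuous_inv_one_sub_mul_exp {w : ℂ} (hw : ‖w‖ < 1) :
    Continuous fun ℓ : ℝ => (1 - w * exp ((2 * π * ℓ : ℝ) * I))⁻¹ :=
  Continuous.inv₀ (by fun_prop) fun ℓ => slitPlane_ne_zero (one_sub_mul_exp_mem_slitPlane hw _)

theorem integral_inv_one_sub_mul_exp {w : ℂ} (hw : ‖w‖ < 1) :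
    ∫ ℓ in (-(1/2):ℝ)..(1/2), (1 - w * exp ((2 * π * ℓ : ℝ) * I))⁻¹ = 1 := by
  have hderiv (ℓ : ℝ) : HasDerivAt
      (fun ℓ : ℝ => (ℓ : ℂ) - (2 * π * I)⁻¹ * log (1 - w * exp ((2 * π * ℓ : ℝ) * I)))
      (1 - w * exp ((2 * π * ℓ : ℝ) * I))⁻¹ ℓ := by
    have hexp : HasDerivAt (fun ℓ : ℝ => exp ((2 * π * ℓ : ℝ) * I))
        (exp ((2 * π * ℓ : ℝ) * I) * (2 * π * I)) ℓ := by
      have := ((hasDerivAt_id ℓ).const_mul (2 * π)).ofReal_comp.mul_const I |>.cexp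
      convert this using 1 <;> simp
    have hlog := ((hexp.const_mul w).const_sub 1).clog_real
      (one_sub_mul_exp_mem_slitPlane hw _)
    refine ((hasDerivAt_id ℓ).ofReal_comp.sub (hlog.const_mul (2 * π * I)⁻¹)).congr_deriv ?_
    have h0 : 1 - w * exp ((2 * π * ℓ : ℝ) * I) ≠ 0 :=
      slitPlane_ne_zero (one_sub_mul_exp_mem_slitPlane hw _)
    have hπ : (π : ℂ) ≠ 0 := ofReal_ne_zero.mpr pi_ne_zero
    generalize exp ((2 * π * ℓ : ℝ) * I) = e at h0 ⊢
    rw [ofReal_one]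
    field_simp
    ring
  rw [intervalIntegral.integral_eq_sub_of_hasDerivAt (fun ℓ _ => hderiv ℓ)
    ((continuous_inv_one_sub_mul_exp hw).intervalIntegrable _ _)]
  have hperiod : exp ((2 * π * (1/2 : ℝ) : ℝ) * I) = exp ((2 * π * (-(1/2) : ℝ) : ℝ) * I) := by
    push_cast
    rw [show 2 * (π : ℂ) * (1 / 2) * I = 2 * π * (-(1 / 2)) * I + 2 * π * I by ring,
      Complex.exp_add, exp_two_pi_mul_I, mul_one]
  rw [hperiod]
  push_cast
  ring

theorem integral_inv_one_sub_mul_exp_neg {w : ℂ} (hw : ‖w‖ < 1) :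
    ∫ ℓ in (-(1/2):ℝ)..(1/2), (1 - w * exp ((2 * π * -ℓ : ℝ) * I))⁻¹ = 1 := by
  have h := intervalIntegral.integral_comp_neg (a := -(1/2)) (b := 1/2)
    fun ℓ : ℝ => (1 - w * exp ((2 * π * ℓ : ℝ) * I))⁻¹
  rw [neg_neg] at h
  rw [h, integral_inv_one_sub_mul_exp hw]

lemma div_sq_add_eq_partial_fractions {K : Type*} [Field K] {z s c w u v : K}
    (hs : s ^ 2 = z ^ 2 + c) (hw : 4 * w = 2 - u - v) (huv : u * v = 1) (hs0 : s ≠ 0)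
    (hsz : s + z ≠ 0) (hu : 1 - (s - z) / (s + z) * u ≠ 0) (hv : 1 - (s - z) / (s + z) * v ≠ 0) :
    z / (z ^ 2 + c * w) =
      s⁻¹ * ((1 - (s - z) / (s + z) * u)⁻¹ + (1 - (s - z) / (s + z) * v)⁻¹ - 1) := by
  have hr : (s - z) / (s + z) * (s + z) = s - z := div_mul_cancel₀ _ hsz
  generalize (s - z) / (s + z) = r at *
  have hden : (1 - r * u) * (1 - r * v) * (s + z) ^ 2 = 4 * (z ^ 2 + c * w) := by
    linear_combination (r ^ 2 * (s + z) ^ 2) * huv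
      + (r * (s + z) + (s - z) - (u + v) * (s + z)) * hr + (2 - u - v) * hs - c * hw
  have hQ : z ^ 2 + c * w ≠ 0 := by
    intro hQ
    rw [hQ, mul_zero] at hden
    exact mul_ne_zero (mul_ne_zero hu hv) (pow_ne_zero 2 hsz) hden
  field_simp
  refine mul_left_cancel₀ (pow_ne_zero 2 hsz) ?_
  linear_combination (z * s) * hden + ((z ^ 2 + c * w) * r ^ 2 * (s + z) ^ 2) * huv
    + ((z ^ 2 + c * w) * (r * (s + z) + (s - z))) * hr

lemma four_mul_sin_sq_eq (x : ℝ) :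
    4 * ((Real.sin (π * x) ^ 2 : ℝ) : ℂ) =
      2 - exp ((2 * π * x : ℝ) * I) - exp ((2 * π * -x : ℝ) * I) := by
  have hcos : Real.cos (2 * π * x) = 1 - 2 * Real.sin (π * x) ^ 2 := by
    rw [show 2 * π * x = 2 * (π * x) by ring, Real.cos_two_mul, Real.cos_sq']
    ring
  rw [exp_mul_I, exp_mul_I, ← ofReal_cos, ← ofReal_sin, ← ofReal_cos, ← ofReal_sin, mul_neg,
    Real.cos_neg, Real.sin_neg, hcos]
  push_cast
  ring

theorem integral_div_sq_add_sq_mul_sin_sq {z : ℂ} (hz : 0 < z.re) (ω : ℝ) :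
    ∫ ℓ in (-(1/2):ℝ)..(1/2), z / (z ^ 2 + ((ω ^ 2 * Real.sin (π * ℓ) ^ 2 : ℝ) : ℂ)) =
      (z ^ 2 + (ω : ℂ) ^ 2).sqrt⁻¹ := by
  set s := (z ^ 2 + (ω : ℂ) ^ 2).sqrt
  have hs : 0 < s.re := re_sqrt_pos (sq_add_ofReal_sq_mem_slitPlane hz ω)
  have hsz : s + z ≠ 0 := fun h => by
    have := congrArg re h
    rw [add_re, zero_re] at this
    linarith
  have hr : ‖(s - z) / (s + z)‖ < 1 := by
    rw [norm_div, div_lt_one (norm_pos_iff.mpr hsz)]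
    exact norm_sqrt_sub_lt_norm_sqrt_add hz ω
  have hne (x : ℝ) : 1 - (s - z) / (s + z) * exp (x * I) ≠ 0 :=
    slitPlane_ne_zero (one_sub_mul_exp_mem_slitPlane hr x)
  have hpartial (ℓ : ℝ) : z / (z ^ 2 + ((ω ^ 2 * Real.sin (π * ℓ) ^ 2 : ℝ) : ℂ)) =
      s⁻¹ * ((1 - (s - z) / (s + z) * exp ((2 * π * ℓ : ℝ) * I))⁻¹
        + (1 - (s - z) / (s + z) * exp ((2 * π * -ℓ : ℝ) * I))⁻¹ - 1) := by
    rw [ofReal_mul, ofReal_pow ω]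
    refine div_sq_add_eq_partial_fractions (sq_sqrt _) (four_mul_sin_sq_eq ℓ) ?_
      (ne_of_apply_ne re (by simpa using hs.ne')) hsz (hne _) (hne _)
    rw [← Complex.exp_add]
    push_cast
    ring_nf
    exact Complex.exp_zero
  have hg := continuous_inv_one_sub_mul_exp hr
  simp_rw [hpartial]
  rw [intervalIntegral.integral_const_mul, intervalIntegral.integral_sub,
    intervalIntegral.integral_add, integral_inv_one_sub_mul_exp hr,
    integral_inv_one_sub_mul_exp_neg hr]
  · norm_num
  · exact hg.intervalIntegrable _ _
  · exact (hg.comp continuous_neg).intervalIntegrable _ _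
  · exact (hg.add (hg.comp continuous_neg)).intervalIntegrable _ _
  · exact intervalIntegrable_const

lemma tendsto_sqrt_sub_I_mul_sq_add_sq {a ω c : ℝ} (hc : 0 ≤ c) (h : ω ^ 2 = a ^ 2 + c ^ 2) :
    Filter.Tendsto (fun ε : ℝ => (((ε : ℂ) - I * a) ^ 2 + (ω : ℂ) ^ 2).sqrt)
      (nhds 0) (nhds (c : ℂ)) := by
  have hval : (((0 : ℝ) : ℂ) - I * a) ^ 2 + (ω : ℂ) ^ 2 = (c : ℂ) ^ 2 := by
    have h' := congrArg ofReal h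
    push_cast at h' ⊢
    linear_combination (a : ℂ) ^ 2 * I_sq + h'
  have hw : Filter.Tendsto (fun ε : ℝ => ((ε : ℂ) - I * a) ^ 2 + (ω : ℂ) ^ 2)
      (nhds 0) (nhds ((c : ℂ) ^ 2)) := by
    rw [← hval]
    exact Continuous.tendsto (by fun_prop) 0
  rw [← sqrt_ofReal_sq hc]
  refine (continuousAt_sqrt (Or.inl ?_)).tendsto.comp hw
  rw [← ofReal_pow, ofReal_re]
  positivity

/-- For the unpinned (acoustic) nearest-neighbor chain with coupling `γ > 0`,
the scattering coefficient `ν(k) = lim_{ε→0+} (1 + γ J̃(ε - i ω_a sin(πk)))⁻¹` exists and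
equals `ω_a cos(πk)/(ω_a cos(πk) + γ)`. -/
theorem stmt13 (γ ωa : ℝ) (hγ : 0 < γ) (hωa : 0 < ωa) (k : ℝ)
    (hk : k ∈ Set.Ioo (0:ℝ) (1/2)) :
    Filter.Tendsto
      (fun ε : ℝ => (1 + (γ : ℂ) * ∫ ℓ in (-(1/2):ℝ)..(1/2),
        ((ε : ℂ) - Complex.I * ((ωa * Real.sin (Real.pi * k) : ℝ) : ℂ)) /
          (((ε : ℂ) - Complex.I * ((ωa * Real.sin (Real.pi * k) : ℝ) : ℂ)) ^ 2
            + ((ωa ^ 2 * Real.sin (Real.pi * ℓ) ^ 2 : ℝ) : ℂ)))⁻¹)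
      (nhdsWithin 0 (Set.Ioi 0))
      (nhds ((ωa * Real.cos (Real.pi * k) / (ωa * Real.cos (Real.pi * k) + γ) : ℝ) : ℂ)) := by
  obtain ⟨hk0, hk1⟩ := hk
  have hωC : 0 < ωa * Real.cos (π * k) :=
    mul_pos hωa (Real.cos_pos_of_mem_Ioo ⟨by nlinarith [pi_pos], by nlinarith [pi_pos]⟩)
  have hsqrt := tendsto_sqrt_sub_I_mul_sq_add_sq hωC.le (a := ωa * Real.sin (π * k))
    (by linear_combination ωa ^ 2 * (Real.sin_sq_add_cos_sq (π * k)).symm)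
  have hωC' : ((ωa * Real.cos (π * k) : ℝ) : ℂ) ≠ 0 := ofReal_ne_zero.mpr hωC.ne'
  have hsum : 1 + (γ : ℂ) * ((ωa * Real.cos (π * k) : ℝ) : ℂ)⁻¹ =
      (((ωa * Real.cos (π * k) + γ) / (ωa * Real.cos (π * k)) : ℝ) : ℂ) := by
    rw [ofReal_div, ofReal_add]
    field_simp
  have hlim := ((hsqrt.inv₀ hωC').const_mul (γ : ℂ) |>.const_add 1).inv₀
    (by rw [hsum, ofReal_ne_zero]; positivity)
  rw [hsum, ← ofReal_inv, inv_div] at hlim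
  refine (hlim.mono_left nhdsWithin_le_nhds).congr' ?_
  filter_upwards [self_mem_nhdsWithin] with ε (hε : 0 < ε)
  rw [integral_div_sq_add_sq_mul_sin_sq (by simpa [-ofReal_mul, -ofReal_sin] using hε) ωa]
end
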